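/- arXiv:1201.4378 — 2 statements merged into one kernel-verified Lean document; each statement's English description precedes it below -/
import Mathlib

section
/- Let Φ be a root system spanning a 2-dimensional Euclidean space V and P an alcoved polytope for Φ (a bounded intersection of half-spaces with outer normals in Φ, with all inequalities tight). Then P has a generating set of cardinality at most |Φ|/2: for each pair of cyclically consecutive roots a, b there is a vertex of P lying on both support hyperplanes perpendicular to a and b. -/
/-!
Sort the directions of the roots by polar angle in `(-π, π]`. Since `Φ = -Φ`, the shift by `±π`
pairs them up, so there are `2m` of them, and splitting the sorted list into `m` pairs of
neighbours gives `m ≤ |Φ| / 2` pairs `(a, b)` of roots with no root direction strictly between.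
For such a pair the angle from `a` to `b` is less than `π`: otherwise `b` would point along `-a`,
all roots would be collinear and `P` would contain a whole line. Hence the support lines of `a`
and `b` meet in a point `x`, and `x ∈ P`: every root `r = α a + β b` lies outside the open cone
spanned by `a` and `b`, so `α ≤ 0` or `β ≤ 0`, and comparing `x` with a point of `P` on the
support line of `a` (resp. `b`) gives `⟪r, x⟫ ≤ c r`. These `m` points form the generating set.
-/

open scoped RealInnerProductSpace

theorem Finset.exists_consecutive_pairs {α : Type*} [LinearOrder α] (s : Finset α) {m : ℕ}
    (hs : s.card = 2 * m) :
    ∃ lo hi : Fin m → α,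
      (∀ i, lo i ∈ s ∧ hi i ∈ s ∧ lo i < hi i ∧ ∀ θ ∈ s, θ ≤ lo i ∨ hi i ≤ θ) ∧
      ∀ θ ∈ s, ∃ i, θ = lo i ∨ θ = hi i := by
  set e := s.orderEmbOfFin hs
  refine ⟨fun i => e ⟨2 * i, by omega⟩, fun i => e ⟨2 * i + 1, by omega⟩,
    fun i => ⟨s.orderEmbOfFin_mem hs _, s.orderEmbOfFin_mem hs _, e.strictMono (by simp), ?_⟩, ?_⟩
  · intro θ hθ
    obtain ⟨p, rfl⟩ : θ ∈ Set.range e := by rwa [s.range_orderEmbOfFin hs]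
    rcases le_or_gt (p : ℕ) (2 * i) with h | h
    · exact Or.inl (e.monotone (Fin.le_def.2 h))
    · exact Or.inr (e.monotone (Fin.le_def.2 h))
  · intro θ hθ
    obtain ⟨p, rfl⟩ : θ ∈ Set.range e := by rwa [s.range_orderEmbOfFin hs]
    refine ⟨⟨p / 2, by omega⟩, ?_⟩
    rcases Nat.even_or_odd' (p : ℕ) with ⟨k, hk | hk⟩
    · exact Or.inl (congrArg e (Fin.ext (by simp; omega)))
    · exact Or.inr (congrArg e (Fin.ext (by simp; omega)))

theorem Finset.even_card_of_forall_shift {α : Type*} [AddCommGroup α] [LinearOrder α]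
    [IsOrderedAddMonoid α] {s : Finset α} {p : α} (hs : ∀ θ ∈ s, -p < θ ∧ θ ≤ p)
    (hadd : ∀ θ ∈ s, θ ≤ 0 → θ + p ∈ s) (hsub : ∀ θ ∈ s, 0 < θ → θ - p ∈ s) :
    Even s.card := by
  have hhalf : (s.filter (· ≤ 0)).card = (s.filter (fun θ => ¬θ ≤ 0)).card := by
    refine Finset.card_nbij' (· + p) (· - p) ?_ ?_ (fun θ _ => by simp) (fun θ _ => by simp)
    · intro θ hθ
      simp only [Finset.coe_filter, Set.mem_ofPred_eq, not_le] at hθ ⊢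
      exact ⟨hadd θ hθ.1 hθ.2, neg_lt_iff_pos_add.1 (hs θ hθ.1).1⟩
    · intro θ hθ
      simp only [Finset.coe_filter, Set.mem_ofPred_eq, not_le] at hθ ⊢
      exact ⟨hsub θ hθ.1 hθ.2, sub_nonpos.2 (hs θ hθ.1).2⟩
  rw [← s.card_filter_add_card_filter_not (· ≤ 0), hhalf]
  exact ⟨_, rfl⟩

namespace AlcovedPolytope

section

variable {E : Type*} [NormedAddCommGroup E] [InnerProductSpace ℝ E]

def polyhedron (Φ : Finset E) (c : E → ℝ) : Set E := ⋂ a ∈ Φ, {x | ⟪a, x⟫ ≤ c a}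

theorem mem_polyhedron {Φ : Finset E} {c : E → ℝ} {x : E} :
    x ∈ polyhedron Φ c ↔ ∀ a ∈ Φ, ⟪a, x⟫ ≤ c a := by
  simp [polyhedron]

theorem inner_eq_of_eq_pos_smul {Φ : Finset E} {c : E → ℝ} {a r x : E} {t : ℝ}
    (ha : a ∈ Φ) (htight : ∃ y ∈ polyhedron Φ c, ⟪r, y⟫ = c r) (hr : r ∈ Φ)
    (hrt : r = t • a) (ht : 0 < t) (hx : x ∈ polyhedron Φ c) (hxa : ⟪a, x⟫ = c a) :
    ⟪r, x⟫ = c r := by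
  obtain ⟨y, hy, hyr⟩ := htight
  refine le_antisymm (mem_polyhedron.1 hx r hr) ?_
  calc c r = t * ⟪a, y⟫ := by rw [← hyr, hrt, real_inner_smul_left]
    _ ≤ t * c a := mul_le_mul_of_nonneg_left (mem_polyhedron.1 hy a ha) ht.le
    _ = ⟪r, x⟫ := by rw [hrt, real_inner_smul_left, hxa]

theorem not_isBounded_polyhedron {Φ : Finset E} {c : E → ℝ} {v : E} (hv : v ≠ 0)
    (hΦv : ∀ a ∈ Φ, ⟪a, v⟫ = 0) (hne : (polyhedron Φ c).Nonempty) :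
    ¬Bornology.IsBounded (polyhedron Φ c) := by
  obtain ⟨x, hx⟩ := hne
  have hline : ∀ t : ℝ, x + t • v ∈ polyhedron Φ c := fun t => by
    rw [mem_polyhedron] at hx ⊢
    intro a ha
    simpa [inner_add_right, inner_smul_right, hΦv a ha] using hx a ha
  intro hbd
  obtain ⟨C, hC⟩ := isBounded_iff_forall_norm_le.1 hbd
  have hv' : 0 < ‖v‖ := norm_pos_iff.2 hv
  set t := (C + ‖x‖ + 1) / ‖v‖
  have ht : t * ‖v‖ = C + ‖x‖ + 1 := div_mul_cancel₀ _ hv'.ne'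
  have : t * ‖v‖ ≤ C + ‖x‖ := calc
    t * ‖v‖ ≤ ‖t • v‖ := by rw [norm_smul, Real.norm_eq_abs]; gcongr; exact le_abs_self t
    _ = ‖(x + t • v) - x‖ := by rw [add_sub_cancel_left]
    _ ≤ ‖x + t • v‖ + ‖x‖ := norm_sub_le _ _
    _ ≤ C + ‖x‖ := by linarith [hC _ (hline t)]
  linarith

end

open Real

local notation "ℝ²" => EuclideanSpace ℝ (Fin 2)

def cross (u v : ℝ²) : ℝ := u 0 * v 1 - u 1 * v 0

noncomputable def polarAngle (v : ℝ²) : ℝ := (Complex.orthonormalBasisOneI.repr.symm v).arg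

theorem polarAngle_mem_Ioc (v : ℝ²) : polarAngle v ∈ Set.Ioc (-π) π :=
  ⟨Complex.neg_pi_lt_arg _, Complex.arg_le_pi _⟩

theorem norm_mul_cos_polarAngle (v : ℝ²) : ‖v‖ * cos (polarAngle v) = v 0 := by
  have h := Complex.norm_mul_cos_arg (Complex.orthonormalBasisOneI.repr.symm v)
  rw [LinearIsometryEquiv.norm_map] at h
  simpa [polarAngle] using h

theorem norm_mul_sin_polarAngle (v : ℝ²) : ‖v‖ * sin (polarAngle v) = v 1 := by
  have h := Complex.norm_mul_sin_arg (Complex.orthonormalBasisOneI.repr.symm v)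
  rw [LinearIsometryEquiv.norm_map] at h
  simpa [polarAngle] using h

theorem cross_eq_norm_mul_norm_mul_sin (u v : ℝ²) :
    cross u v = ‖u‖ * ‖v‖ * sin (polarAngle v - polarAngle u) := by
  rw [cross, ← norm_mul_cos_polarAngle u, ← norm_mul_sin_polarAngle u,
    ← norm_mul_cos_polarAngle v, ← norm_mul_sin_polarAngle v, sin_sub]
  ring

theorem eq_smul_of_polarAngle_eq {u v : ℝ²} (hv : v ≠ 0) (h : polarAngle u = polarAngle v) :
    u = (‖u‖ / ‖v‖) • v := by
  have hv' : ‖v‖ ≠ 0 := norm_ne_zero_iff.2 hv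
  ext i
  fin_cases i
  · simp only [Fin.zero_eta, Fin.isValue, ← norm_mul_cos_polarAngle u, h, PiLp.smul_apply,
      ← norm_mul_cos_polarAngle v, smul_eq_mul]
    field_simp
  · simp only [Fin.mk_one, Fin.isValue, ← norm_mul_sin_polarAngle u, h, PiLp.smul_apply,
      ← norm_mul_sin_polarAngle v, smul_eq_mul]
    field_simp

theorem polarAngle_neg_of_nonpos {v : ℝ²} (hv : v ≠ 0) (h : polarAngle v ≤ 0) :
    polarAngle (-v) = polarAngle v + π := by
  set z := Complex.orthonormalBasisOneI.repr.symm v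
  have hz : z ≠ 0 := (map_ne_zero_iff _ Complex.orthonormalBasisOneI.repr.symm.injective).2 hv
  simp only [polarAngle, map_neg]
  rcases h.lt_or_eq with h | h
  · exact Complex.arg_neg_eq_arg_add_pi_of_im_neg (Complex.arg_neg_iff.1 h)
  · obtain ⟨hre, him⟩ := Complex.arg_eq_zero_iff.1 h
    refine Complex.arg_neg_eq_arg_add_pi_iff.2 (Or.inr ⟨him, hre.lt_of_ne ?_⟩)
    exact fun hre0 => hz (Complex.ext hre0.symm him)

theorem polarAngle_neg_of_pos {v : ℝ²} (h : 0 < polarAngle v) :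
    polarAngle (-v) = polarAngle v - π := by
  simp only [polarAngle, map_neg] at h ⊢
  refine Complex.arg_neg_eq_arg_sub_pi_iff.2 ?_
  rcases (Complex.arg_nonneg_iff.1 h.le).lt_or_eq with him | him
  · exact Or.inl him
  · exact Or.inr ⟨him.symm, not_le.1 fun hre => h.ne' (Complex.arg_eq_zero_iff.2 ⟨hre, him.symm⟩)⟩

theorem inner_eq_mul_add_mul (u v : ℝ²) : ⟪u, v⟫ = u 0 * v 0 + u 1 * v 1 := by
  simp [PiLp.inner_apply, Fin.sum_univ_two, mul_comm]

theorem cross_mul_inner (a b r x : ℝ²) :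
    cross a b * ⟪r, x⟫ = cross r b * ⟪a, x⟫ + cross a r * ⟪b, x⟫ := by
  simp only [cross, inner_eq_mul_add_mul]
  ring

theorem lt_and_lt_of_sin_sub_pos {α β γ : ℝ} (hα : α ∈ Set.Ioc (-π) π)
    (hβ : β ∈ Set.Ioc (-π) π) (hγ : γ ∈ Set.Ioc (-π) π) (hαγ : α < γ)
    (h₁ : 0 < sin (β - α)) (h₂ : 0 < sin (γ - β)) : α < β ∧ β < γ := by
  have hlow : ∀ x, -π ≤ x → x ≤ 0 → ¬0 < sin x := fun x h h' =>
    (sin_nonpos_of_nonpos_of_neg_pi_le h' h).not_gt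
  have hhigh : ∀ x, π ≤ x → x ≤ 2 * π → ¬0 < sin x := fun x h h' => by
    rw [← sin_sub_two_pi]
    exact hlow _ (by linarith) (by linarith)
  obtain ⟨hα₁, hα₂⟩ := hα
  obtain ⟨hβ₁, hβ₂⟩ := hβ
  obtain ⟨hγ₁, hγ₂⟩ := hγ
  constructor
  · by_contra! h
    by_cases hπ : -π ≤ β - α
    · exact hlow _ hπ (by linarith) h₁
    · exact hhigh (γ - β) (by linarith) (by linarith) h₂
  · by_contra! h
    by_cases hπ : -π ≤ γ - β
    · exact hlow _ hπ (by linarith) h₂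
    · exact hhigh (β - α) (by linarith) (by linarith) h₁

theorem cross_nonpos_or_cross_nonpos {a b r : ℝ²} (hab : polarAngle a < polarAngle b)
    (hr : polarAngle r ≤ polarAngle a ∨ polarAngle b ≤ polarAngle r) :
    cross a r ≤ 0 ∨ cross r b ≤ 0 := by
  by_contra! h
  rw [cross_eq_norm_mul_norm_mul_sin, cross_eq_norm_mul_norm_mul_sin] at h
  obtain ⟨h₁, h₂⟩ := lt_and_lt_of_sin_sub_pos (polarAngle_mem_Ioc a) (polarAngle_mem_Ioc r)
    (polarAngle_mem_Ioc b) hab (pos_of_mul_pos_right h.1 (by positivity))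
    (pos_of_mul_pos_right h.2 (by positivity))
  rcases hr with hr | hr <;> linarith

theorem exists_cross_ne_zero {Φ : Finset ℝ²} {c : ℝ² → ℝ}
    (hbd : Bornology.IsBounded (polyhedron Φ c)) (hne : (polyhedron Φ c).Nonempty)
    {a : ℝ²} (ha : a ≠ 0) : ∃ r ∈ Φ, cross a r ≠ 0 := by
  by_contra! h
  refine not_isBounded_polyhedron (v := !₂[-a 1, a 0]) ?_ (fun r hr => ?_) hne hbd
  · intro hv
    have h₀ := congrArg (fun w : ℝ² => w 0) hv
    have h₁ := congrArg (fun w : ℝ² => w 1) hv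
    simp only [Fin.isValue, Matrix.cons_val_zero, PiLp.zero_apply, neg_eq_zero,
      Matrix.cons_val_one, Matrix.cons_val_fin_one] at h₀ h₁
    exact ha (by ext i; fin_cases i <;> simp [h₀, h₁])
  · rw [inner_eq_mul_add_mul, ← h r hr, cross]
    simp only [Fin.isValue, Matrix.cons_val_zero, Matrix.cons_val_one, Matrix.cons_val_fin_one]
    ring

theorem cross_pos_of_consecutive {Φ : Finset ℝ²} {c : ℝ² → ℝ} (hΦ0 : ∀ a ∈ Φ, a ≠ 0)
    (hΦneg : ∀ a ∈ Φ, -a ∈ Φ) (hbd : Bornology.IsBounded (polyhedron Φ c))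
    (hne : (polyhedron Φ c).Nonempty) {a b : ℝ²} (ha : a ∈ Φ) (hb : b ∈ Φ)
    (hab : polarAngle a < polarAngle b)
    (hcons : ∀ r ∈ Φ, polarAngle r ≤ polarAngle a ∨ polarAngle b ≤ polarAngle r) :
    0 < cross a b := by
  have ha0 := hΦ0 a ha
  by_contra! hnonpos
  have hπ : π ≤ polarAngle b - polarAngle a := by
    by_contra! h
    rw [cross_eq_norm_mul_norm_mul_sin] at hnonpos
    have := sin_pos_of_pos_of_lt_pi (sub_pos.2 hab) h
    exact hnonpos.not_gt (mul_pos (mul_pos (norm_pos_iff.2 ha0) (norm_pos_iff.2 (hΦ0 b hb))) this)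
  have hθa : polarAngle a ≤ 0 := by linarith [(polarAngle_mem_Ioc b).2]
  -- `-a` cannot lie strictly between `a` and `b`, so `b` points along `-a` and every root is
  -- forced onto the line `ℝ a`
  have hneg : polarAngle b = polarAngle (-a) := by
    rw [polarAngle_neg_of_nonpos ha0 hθa]
    rcases hcons (-a) (hΦneg a ha) with h | h <;>
      rw [polarAngle_neg_of_nonpos ha0 hθa] at h <;> linarith [pi_pos]
  have hb_eq := eq_smul_of_polarAngle_eq (neg_ne_zero.2 ha0) hneg
  set t := ‖b‖ / ‖-a‖
  have hcross : ∀ r, cross r b = t * cross a r := fun r => by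
    rw [hb_eq]
    simp only [cross, Fin.isValue, smul_neg, PiLp.neg_apply, PiLp.smul_apply, smul_eq_mul]
    ring
  have hline : ∀ r ∈ Φ, cross a r ≤ 0 := fun r hr => by
    refine (cross_nonpos_or_cross_nonpos hab (hcons r hr)).elim id fun h => ?_
    rw [hcross] at h
    exact nonpos_of_mul_nonpos_right h (div_pos (norm_pos_iff.2 (hΦ0 b hb)) (by simpa using ha0))
  obtain ⟨r, hr, hr0⟩ := exists_cross_ne_zero hbd hne ha0
  refine hr0 (le_antisymm (hline r hr) ?_)
  have := hline (-r) (hΦneg r hr)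
  simp only [cross, PiLp.neg_apply] at this ⊢
  linarith

theorem exists_mem_polyhedron_of_cross_pos {Φ : Finset ℝ²} {c : ℝ² → ℝ}
    (htight : ∀ a ∈ Φ, ∃ x ∈ polyhedron Φ c, ⟪a, x⟫ = c a) {a b : ℝ²} (ha : a ∈ Φ) (hb : b ∈ Φ)
    (hab : 0 < cross a b) (hsep : ∀ r ∈ Φ, cross a r ≤ 0 ∨ cross r b ≤ 0) :
    ∃ x ∈ polyhedron Φ c, ⟪a, x⟫ = c a ∧ ⟪b, x⟫ = c b := by
  -- the intersection of the two support lines, by Cramer's rule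
  set x : ℝ² := !₂[(c a * b 1 - c b * a 1) / cross a b, (a 0 * c b - b 0 * c a) / cross a b]
  have hxa : ⟪a, x⟫ = c a := by
    simp only [inner_eq_mul_add_mul, x, Fin.isValue, Matrix.cons_val_zero, Matrix.cons_val_one,
      Matrix.cons_val_fin_one]
    field_simp
    simp only [cross]
    ring
  have hxb : ⟪b, x⟫ = c b := by
    simp only [inner_eq_mul_add_mul, x, Fin.isValue, Matrix.cons_val_zero, Matrix.cons_val_one,
      Matrix.cons_val_fin_one]
    field_simp
    simp only [cross]
    ring
  refine ⟨x, mem_polyhedron.2 fun r hr => ?_, hxa, hxb⟩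
  refine le_of_mul_le_mul_left ?_ hab
  rw [cross_mul_inner a b r x, hxa, hxb]
  rcases hsep r hr with h | h
  · obtain ⟨y, hy, hya⟩ := htight a ha
    calc cross r b * c a + cross a r * c b ≤ cross r b * c a + cross a r * ⟪b, y⟫ := by
          linarith [mul_le_mul_of_nonpos_left (mem_polyhedron.1 hy b hb) h]
      _ = cross a b * ⟪r, y⟫ := by rw [cross_mul_inner a b r y, hya]
      _ ≤ cross a b * c r := mul_le_mul_of_nonneg_left (mem_polyhedron.1 hy r hr) hab.le
  · obtain ⟨y, hy, hyb⟩ := htight b hb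
    calc cross r b * c a + cross a r * c b ≤ cross r b * ⟪a, y⟫ + cross a r * c b := by
          linarith [mul_le_mul_of_nonpos_left (mem_polyhedron.1 hy a ha) h]
      _ = cross a b * ⟪r, y⟫ := by rw [cross_mul_inner a b r y, hyb]
      _ ≤ cross a b * c r := mul_le_mul_of_nonneg_left (mem_polyhedron.1 hy r hr) hab.le

theorem inner_eq_of_polarAngle_eq {Φ : Finset ℝ²} {c : ℝ² → ℝ}
    (htight : ∀ a ∈ Φ, ∃ x ∈ polyhedron Φ c, ⟪a, x⟫ = c a) {a r x : ℝ²} (ha : a ∈ Φ)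
    (hr : r ∈ Φ) (ha0 : a ≠ 0) (hr0 : r ≠ 0) (h : polarAngle r = polarAngle a)
    (hx : x ∈ polyhedron Φ c) (hxa : ⟪a, x⟫ = c a) : ⟪r, x⟫ = c r :=
  inner_eq_of_eq_pos_smul ha (htight r hr) hr (eq_smul_of_polarAngle_eq ha0 h)
    (div_pos (norm_pos_iff.2 hr0) (norm_pos_iff.2 ha0)) hx hxa

theorem exists_vertex_of_consecutive {Φ : Finset ℝ²} {c : ℝ² → ℝ} (hΦ0 : ∀ a ∈ Φ, a ≠ 0)
    (hΦneg : ∀ a ∈ Φ, -a ∈ Φ) (hbd : Bornology.IsBounded (polyhedron Φ c))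
    (htight : ∀ a ∈ Φ, ∃ x ∈ polyhedron Φ c, ⟪a, x⟫ = c a) {a b : ℝ²} (ha : a ∈ Φ) (hb : b ∈ Φ)
    (hab : polarAngle a < polarAngle b)
    (hcons : ∀ r ∈ Φ, polarAngle r ≤ polarAngle a ∨ polarAngle b ≤ polarAngle r) :
    ∃ x ∈ polyhedron Φ c, ∀ r ∈ Φ,
      polarAngle r = polarAngle a ∨ polarAngle r = polarAngle b → ⟪r, x⟫ = c r := by
  obtain ⟨y, hy, -⟩ := htight a ha
  obtain ⟨x, hx, hxa, hxb⟩ := exists_mem_polyhedron_of_cross_pos htight ha hb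
    (cross_pos_of_consecutive hΦ0 hΦneg hbd ⟨y, hy⟩ ha hb hab hcons)
    (fun r hr => cross_nonpos_or_cross_nonpos hab (hcons r hr))
  refine ⟨x, hx, fun r hr hθ => hθ.elim (fun h => ?_) (fun h => ?_)⟩
  · exact inner_eq_of_polarAngle_eq htight ha hr (hΦ0 a ha) (hΦ0 r hr) h hx hxa
  · exact inner_eq_of_polarAngle_eq htight hb hr (hΦ0 b hb) (hΦ0 r hr) h hx hxb

theorem even_card_image_polarAngle {Φ : Finset ℝ²} (hΦ0 : ∀ a ∈ Φ, a ≠ 0)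
    (hΦneg : ∀ a ∈ Φ, -a ∈ Φ) : Even (Φ.image polarAngle).card := by
  refine Finset.even_card_of_forall_shift (p := π) ?_ ?_ ?_
  · intro θ hθ
    obtain ⟨a, -, rfl⟩ := Finset.mem_image.1 hθ
    exact polarAngle_mem_Ioc a
  · intro θ hθ hle
    obtain ⟨a, ha, rfl⟩ := Finset.mem_image.1 hθ
    rw [← polarAngle_neg_of_nonpos (hΦ0 a ha) hle]
    exact Finset.mem_image_of_mem _ (hΦneg a ha)
  · intro θ hθ hpos
    obtain ⟨a, ha, rfl⟩ := Finset.mem_image.1 hθ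
    rw [← polarAngle_neg_of_pos hpos]
    exact Finset.mem_image_of_mem _ (hΦneg a ha)

end AlcovedPolytope

open AlcovedPolytope in
theorem dim_two_generating_set_general
    (Φ : Finset (EuclideanSpace ℝ (Fin 2))) (hΦ0 : ∀ a ∈ Φ, a ≠ 0)
    (hΦneg : ∀ a ∈ Φ, -a ∈ Φ) (c : EuclideanSpace ℝ (Fin 2) → ℝ)
    (P : Set (EuclideanSpace ℝ (Fin 2)))
    (hP : P = ⋂ a ∈ Φ, {x | ⟪a, x⟫ ≤ c a})
    (hbd : Bornology.IsBounded P)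
    (htight : ∀ a ∈ Φ, ∃ x ∈ P, ⟪a, x⟫ = c a) :
    ∃ S : Finset (EuclideanSpace ℝ (Fin 2)),
      ↑S ⊆ P ∧ S.card ≤ Φ.card / 2 ∧ ∀ a ∈ Φ, ∃ s ∈ S, ⟪a, s⟫ = c a := by
  change P = polyhedron Φ c at hP
  subst hP
  obtain ⟨m, hm⟩ := even_card_image_polarAngle hΦ0 hΦneg
  obtain ⟨lo, hi, hpair, hcover⟩ :=
    (Φ.image polarAngle).exists_consecutive_pairs (hm.trans (two_mul m).symm)
  have hvertex : ∀ i, ∃ x ∈ polyhedron Φ c, ∀ r ∈ Φ,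
      polarAngle r = lo i ∨ polarAngle r = hi i → ⟪r, x⟫ = c r := fun i => by
    obtain ⟨hlo, hhi, hlt, hcons⟩ := hpair i
    obtain ⟨a, ha, hla⟩ := Finset.mem_image.1 hlo
    obtain ⟨b, hb, hhb⟩ := Finset.mem_image.1 hhi
    rw [← hla, ← hhb] at hlt ⊢
    exact exists_vertex_of_consecutive hΦ0 hΦneg hbd htight ha hb hlt
      (fun r hr => hla ▸ hhb ▸ hcons _ (Finset.mem_image_of_mem _ hr))
  choose x hx hxtight using hvertex
  refine ⟨Finset.univ.image x, by simpa [Set.subset_def] using hx, ?_, fun r hr => ?_⟩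
  · calc (Finset.univ.image x).card ≤ m := Finset.card_image_le.trans (by simp)
      _ ≤ Φ.card / 2 := by have := Φ.card_image_le (f := polarAngle); omega
  · obtain ⟨i, hi⟩ := hcover _ (Finset.mem_image_of_mem _ hr)
    exact ⟨x i, Finset.mem_image_of_mem _ (Finset.mem_univ i), hxtight i r hr hi⟩

/-- A two-dimensional alcoved polytope for a root system `Φ` (a bounded
intersection of half-spaces with outer normals in `Φ`, all tight) has a
generating set of cardinality at most `|Φ| / 2`: a set of points of `P`
touching every support hyperplane perpendicular to a root. -/
theorem dim_two_generating_set
    (Φ : Finset (EuclideanSpace ℝ (Fin 2))) (hΦ0 : ∀ a ∈ Φ, a ≠ 0)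
    (hΦneg : ∀ a ∈ Φ, -a ∈ Φ) (c : EuclideanSpace ℝ (Fin 2) → ℝ)
    (P : Set (EuclideanSpace ℝ (Fin 2)))
    (hP : P = ⋂ a ∈ Φ, {x | ⟪a, x⟫ ≤ c a})
    (hbd : Bornology.IsBounded P) (hne : P.Nonempty)
    (htight : ∀ a ∈ Φ, ∃ x ∈ P, ⟪a, x⟫ = c a) :
    ∃ S : Finset (EuclideanSpace ℝ (Fin 2)),
      ↑S ⊆ P ∧ S.card ≤ Φ.card / 2 ∧ ∀ a ∈ Φ, ∃ s ∈ S, ⟪a, s⟫ = c a :=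
  dim_two_generating_set_general Φ hΦ0 hΦneg c P hP hbd htight
end

section
/- In ℝ^3/ℝ(1,1,1), the alcoved polytope generated by the two points represented by (0,0,1) and (0,1,0) (with respect to the type A_2 root half-spaces x_i − x_j ≤ c) is the square with vertices (0,0,0), (0,0,1), (0,1,0), (0,1,1); however, the tropical convex hull of these two points is strictly smaller than this square (in particular it does not contain (0,1,1) modulo ℝ(1,1,1)). -/
/-!
In a min-plus combination `z = min (μ + a) (ν + b)` the coordinate `z j` is attained by one of
the two terms, say `μ + a j`; since `z ≤ μ + a`, the whole of `z - z j` then lies below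
`a - a j`. For `a = (0,0,1)`, `b = (0,1,0)` and `j = 0`, the vertex `(0,1,1)` lies below neither.
The square itself is read off from the six root inequalities, of which the two on `x 1 - x 2`
follow from the other four.
-/

theorem min_add_sub_le_or_min_add_sub_le {ι : Type*} (a b : ι → ℝ) (μ ν : ℝ) (j : ι) :
    (∀ i, min (μ + a i) (ν + b i) - min (μ + a j) (ν + b j) ≤ a i - a j) ∨
      (∀ i, min (μ + a i) (ν + b i) - min (μ + a j) (ν + b j) ≤ b i - b j) := by
  rcases min_choice (μ + a j) (ν + b j) with h | h
  · refine .inl fun i => ?_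
    have := min_le_left (μ + a i) (ν + b i)
    linarith
  · refine .inr fun i => ?_
    have := min_le_right (μ + a i) (ν + b i)
    linarith

theorem alcovedPolytope_eq_square :
    {x : Fin 3 → ℝ | ∀ i j : Fin 3, i ≠ j →
        x i - x j ≤ max ((![0, 0, 1] : Fin 3 → ℝ) i - ![0, 0, 1] j)
          ((![0, 1, 0] : Fin 3 → ℝ) i - ![0, 1, 0] j)} =
      {x : Fin 3 → ℝ | 0 ≤ x 1 - x 0 ∧ x 1 - x 0 ≤ 1 ∧
        0 ≤ x 2 - x 0 ∧ x 2 - x 0 ≤ 1} := by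
  ext x
  simp only [Set.mem_ofPred_eq, Fin.forall_fin_succ]
  simp
  constructor
  · rintro ⟨⟨h01, h02⟩, ⟨h10, -⟩, h20, -⟩
    exact ⟨h01, h10, h02, h20⟩
  · rintro ⟨h01, h10, h02, h20⟩
    exact ⟨⟨h01, h02⟩, ⟨h10, by linarith⟩, h20, by linarith⟩

theorem min_add_ne_const_add {ι : Type*} {a b v : ι → ℝ} {j : ι}
    (ha : ∃ i, a i - a j < v i - v j) (hb : ∃ i, b i - b j < v i - v j) (μ ν r : ℝ) :
    (fun i => min (μ + a i) (ν + b i)) ≠ (fun _ : ι => r) + v := by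
  intro h
  have hz : ∀ i, min (μ + a i) (ν + b i) - min (μ + a j) (ν + b j) = v i - v j := fun i => by
    rw [congrFun h i, congrFun h j]
    simp
  obtain ⟨ia, hia⟩ := ha
  obtain ⟨ib, hib⟩ := hb
  rcases min_add_sub_le_or_min_add_sub_le a b μ ν j with hle | hle
  · linarith [hz ia ▸ hle ia]
  · linarith [hz ib ▸ hle ib]

/-- In `ℝ³/ℝ(1,1,1)`, the alcoved polytope generated by the two points
`p = (0,0,1)` and `q = (0,1,0)` (for the type `A₂` root half-spaces
`x i - x j ≤ c`) is the unit square with vertices `(0,0,0)`, `(0,0,1)`,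
`(0,1,0)`, `(0,1,1)` (described modulo the all-ones line by
`0 ≤ x₁ - x₀ ≤ 1` and `0 ≤ x₂ - x₀ ≤ 1`); however, the min-plus tropical
convex hull of `p` and `q` does not contain the vertex `(0,1,1)` modulo
`ℝ(1,1,1)`. -/
theorem square_generated_but_not_tropical_hull
    (p q : Fin 3 → ℝ) (hp : p = ![0, 0, 1]) (hq : q = ![0, 1, 0]) :
    {x : Fin 3 → ℝ | ∀ i j : Fin 3, i ≠ j →
        x i - x j ≤ max (p i - p j) (q i - q j)} =
      {x : Fin 3 → ℝ | 0 ≤ x 1 - x 0 ∧ x 1 - x 0 ≤ 1 ∧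
        0 ≤ x 2 - x 0 ∧ x 2 - x 0 ≤ 1} ∧
    ∀ μ ν r : ℝ,
      (fun i => min (μ + p i) (ν + q i)) ≠ (fun i : Fin 3 => r) + ![0, 1, 1] := by
  subst hp hq
  exact ⟨alcovedPolytope_eq_square, min_add_ne_const_add (j := 0) ⟨1, by simp⟩ ⟨2, by simp⟩⟩
end
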